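/- Let H and K be self-adjoint operators on n qubits with local quantum norm at most M, and let ω_H = e^{−H}/Tr e^{−H} and ω_K = e^{−K}/Tr e^{−K} be the associated Gibbs states. Assume that both ω_H and ω_K satisfy the transportation-cost inequality ‖ρ − ω‖²_{W₁} ≤ (nC/2) S(ρ‖ω) for every n-qubit state ρ, with the same constant C > 0. Then ‖ω_H − ω_K‖²_{W₁loc} / n² ≤ ‖ω_H − ω_K‖²_{W₁} / n² ≤ (MC/2) · ‖ω_H − ω_K‖_{W₁loc} / n. -/

import Mathlib

open Matrix BigOperators
open scoped ComplexOrder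

noncomputable section

namespace QW1

variable {ι : Type*} [Fintype ι] [DecidableEq ι]

/-- The space of (not necessarily Hermitian) operators on a system of qubits labelled by `ι`:
matrices indexed by the computational basis `ι → Fin 2`. -/
abbrev QMat (ι : Type*) [Fintype ι] [DecidableEq ι] :=
  Matrix (ι → Fin 2) (ι → Fin 2) ℂ

/-- The operator norm (largest singular value) of a matrix. -/
noncomputable def opNorm {d : Type*} [Fintype d] [DecidableEq d] (A : Matrix d d ℂ) : ℝ :=
  ⨆ i, Real.sqrt ((Matrix.isHermitian_conjTranspose_mul_self A).eigenvalues i)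

/-- The trace norm (sum of singular values) of a matrix. -/
noncomputable def traceNorm {d : Type*} [Fintype d] [DecidableEq d] (A : Matrix d d ℂ) : ℝ :=
  ∑ i, Real.sqrt ((Matrix.isHermitian_conjTranspose_mul_self A).eigenvalues i)

/-- Combine an assignment of basis states on `Λ` and on its complement into one on all of `ι`. -/
def merge (Λ : Finset ι) (f : {x // x ∈ Λ} → Fin 2) (g : {x // x ∉ Λ} → Fin 2) (x : ι) :
    Fin 2 :=
  if h : x ∈ Λ then f ⟨x, h⟩ else g ⟨x, h⟩

/-- The partial trace over the qubits outside `Λ`, `Tr_{Λᶜ}`, yielding an operator on the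
qubits in `Λ`. -/
noncomputable def ptrace (Λ : Finset ι) (A : QMat ι) :
    Matrix ({x // x ∈ Λ} → Fin 2) ({x // x ∈ Λ} → Fin 2) ℂ :=
  fun f g => ∑ h : {x : ι // x ∉ Λ} → Fin 2, A (merge Λ f h) (merge Λ g h)

/-- The extension `M ⊗ I_{Λᶜ}` of an operator `M` on the qubits in `Λ` to all the qubits. -/
def embed (Λ : Finset ι)
    (M : Matrix ({x // x ∈ Λ} → Fin 2) ({x // x ∈ Λ} → Fin 2) ℂ) : QMat ι :=
  fun f g =>
    (if ∀ x : ι, x ∉ Λ → f x = g x then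
      M (fun x => f x.1) (fun x => g x.1) else 0)

/-- `H` acts on (at most) the qubits in `Λ`: it has the form `H_Λ ⊗ I_{Λᶜ}` with `H_Λ`
self-adjoint. -/
def ActsOn (Λ : Finset ι) (H : QMat ι) : Prop :=
  ∃ M, M.IsHermitian ∧ H = embed Λ M

/-- The local quantum norm with penalty coefficients `c`. -/
noncomputable def localNorm (c : ℕ → ℝ) (H : QMat ι) : ℝ :=
  sInf { r : ℝ | ∃ F : Finset ι → QMat ι, (∀ Λ, ActsOn Λ (F Λ)) ∧ H = ∑ Λ, F Λ ∧
    r = 2 * ⨆ x : ι, ∑ Λ ∈ Finset.univ.filter (fun Λ : Finset ι => x ∈ Λ),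
      c Λ.card * opNorm (F Λ) }

/-- The local quantum `W₁` norm: the dual of the local quantum norm. -/
noncomputable def W1loc (c : ℕ → ℝ) (Δ : QMat ι) : ℝ :=
  sSup { r : ℝ | ∃ H : QMat ι, H.IsHermitian ∧ localNorm c H ≤ 1 ∧ r = ((Δ * H).trace).re }

/-- The quantum `W₁` norm of De Palma et al. -/
noncomputable def W1 (Δ : QMat ι) : ℝ :=
  sInf { r : ℝ | ∃ D : ι → QMat ι,
    (∀ x, (D x).IsHermitian ∧ (D x).trace = 0 ∧ ptrace ({x}ᶜ : Finset ι) (D x) = 0) ∧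
    Δ = ∑ x, D x ∧ r = (1 / 2) * ∑ x, traceNorm (D x) }

/-- Tensor product of operators on two disjoint families of qubits. -/
def tensor {κ : Type*} [Fintype κ] [DecidableEq κ] (A : QMat ι) (B : QMat κ) :
    QMat (ι ⊕ κ) :=
  fun f g => A (f ∘ Sum.inl) (g ∘ Sum.inl) * B (f ∘ Sum.inr) (g ∘ Sum.inr)

/-- Tensor product of single-qubit operators, one for each qubit. -/
def tensorAll (B : ι → Matrix (Fin 2) (Fin 2) ℂ) : QMat ι :=
  fun f g => ∏ j, B j (f j) (g j)

/-- The four Pauli matrices `I, X, Y, Z`. -/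
noncomputable def pauli : Fin 4 → Matrix (Fin 2) (Fin 2) ℂ :=
  ![1, !![0, 1; 1, 0], !![0, -Complex.I; Complex.I, 0], !![1, 0; 0, -1]]

/-- The Pauli operator `σ_{a 1} ⊗ ⋯ ⊗ σ_{a n}`. -/
noncomputable def pauliOp (a : ι → Fin 4) : QMat ι :=
  tensorAll fun j => pauli (a j)

/-- The weight (locality) of a Pauli operator: the number of non-identity factors. -/
def weight (a : ι → Fin 4) : ℕ :=
  (Finset.univ.filter fun j => a j ≠ 0).card

/-- A quantum state: a positive semidefinite matrix of unit trace. (`PosSemidef` is taken with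
respect to the complex order.) -/
def IsState (ρ : QMat ι) : Prop :=
  ρ.PosSemidef ∧ ρ.trace = 1

end QW1

namespace QW1

variable {ι : Type*} [Fintype ι] [DecidableEq ι]

/-- The dependence `∂_x H` of the observable `H` on the qubit `x`. -/
noncomputable def dep (x : ι) (H : QMat ι) : ℝ :=
  2 * sInf { r : ℝ | ∃ K : QMat ι, ActsOn ({x}ᶜ : Finset ι) K ∧ r = opNorm (H - K) }

/-- The quantum Lipschitz constant `‖H‖_L = max_x ∂_x H`. -/
noncomputable def lipNorm (H : QMat ι) : ℝ :=
  ⨆ x : ι, dep x H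

/-- Single-qubit unitaries rotating the eigenbases of the Paulis `Z`, `X`, `Y`
to the computational basis. -/
noncomputable def ubasis : Fin 3 → Matrix (Fin 2) (Fin 2) ℂ :=
  ![1,
    (Real.sqrt 2 : ℂ)⁻¹ • !![1, 1; 1, -1],
    (Real.sqrt 2 : ℂ)⁻¹ • !![1, -Complex.I; 1, Complex.I]]

/-- The single-qubit classical shadow `3 U† |b⟩⟨b| U − I`. -/
noncomputable def shadow1 (w : Fin 3) (b : Fin 2) : Matrix (Fin 2) (Fin 2) ℂ :=
  (3 : ℂ) • ((ubasis w)ᴴ * Matrix.single b b 1 * ubasis w) - 1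

/-- The classical shadow `⊗_j (3 U_j† |b_j⟩⟨b_j| U_j − I)` of the Pauli measurement
primitive associated with the sampled basis choices and outcomes `s`. -/
noncomputable def shadowOf (s : ι → Fin 3 × Fin 2) : QMat ι :=
  tensorAll fun j => shadow1 (s j).1 (s j).2

/-- The probability of the sample `s` (a uniformly random Pauli basis measured on each qubit,
with outcomes distributed with the Born probability `⟨b|UρU†|b⟩`) when measuring one copy
of `ρ` in the Pauli measurement primitive. -/
noncomputable def shadowPMF (ρ : QMat ι) (s : ι → Fin 3 × Fin 2) : ℝ :=
  ((3 : ℝ) ^ Fintype.card ι)⁻¹ *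
    (((tensorAll fun j => ubasis (s j).1) * ρ * (tensorAll fun j => ubasis (s j).1)ᴴ)
      (fun j => (s j).2) (fun j => (s j).2)).re

open Classical in
/-- The probability that `N` independent classical shadows of `ρ` (from the Pauli
measurement primitive) satisfy the event `E`. -/
noncomputable def shadowProb (ρ : QMat ι) (N : ℕ)
    (E : (Fin N → ι → Fin 3 × Fin 2) → Prop) : ℝ :=
  ∑ ω : Fin N → ι → Fin 3 × Fin 2, if E ω then ∏ i, shadowPMF ρ (ω i) else 0

/-- Extension of a single-qubit operator `K` on the qubit `i`, acting as the identity on the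
remaining qubits. -/
noncomputable def oneSite (i : ι) (K : Matrix (Fin 2) (Fin 2) ℂ) : QMat ι :=
  tensorAll fun j => if j = i then K else 1

/-- Logarithm of a Hermitian matrix via its spectral decomposition (junk value otherwise). -/
noncomputable def mlog {d : Type*} [Fintype d] [DecidableEq d] (A : Matrix d d ℂ) :
    Matrix d d ℂ :=
  if hA : A.IsHermitian then
    (hA.eigenvectorUnitary : Matrix d d ℂ) *
      Matrix.diagonal (fun i => (Real.log (hA.eigenvalues i) : ℂ)) *
      star (hA.eigenvectorUnitary : Matrix d d ℂ)
  else 0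

/-- The quantum relative entropy `S(ρ‖σ) = Tr[ρ(ln ρ − ln σ)]`. -/
noncomputable def relEnt (ρ σ : QMat ι) : ℝ :=
  ((ρ * (mlog ρ - mlog σ)).trace).re

/-- The Gibbs state `e^{−H} / Tr e^{−H}`. -/
noncomputable def gibbs (H : QMat ι) : QMat ι :=
  ((NormedSpace.exp (-H)).trace)⁻¹ • NormedSpace.exp (-H)

end QW1

open QW1 Matrix Complex


/-!
Weak duality: if `Δ = ∑ₓ Dₓ` with `Tr_x Dₓ = 0` and `G = ∑_Λ G_Λ` with `G_Λ` acting on `Λ`, then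
`Tr[Dₓ G_Λ] = 0` unless `x ∈ Λ`, so Hölder's inequality gives
`Tr[ΔG] ≤ ‖G‖_loc · ½ ∑ₓ ‖Dₓ‖₁`. Such decompositions of a traceless `Δ` exist (replace the qubits
one at a time by the maximally mixed state and telescope), whence `‖Δ‖_{W₁loc} ≤ ‖Δ‖_{W₁}`.

For the second inequality, add the transportation-cost inequalities of `ω_K` at `ρ = ω_H` and of
`ω_H` at `ρ = ω_K`. Since `ln ω_H = -H - ln Z_H`, the symmetrized relative entropy is
`Tr[(ω_H - ω_K)(K - H)]`, which by duality is at most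
`‖K - H‖_loc ‖ω_H - ω_K‖_{W₁loc} ≤ 2M ‖ω_H - ω_K‖_{W₁loc}`.
-/

namespace QW1

open scoped Matrix.Norms.L2Operator MatrixOrder InnerProductSpace

section Norms

variable {d : Type*} [Fintype d] [DecidableEq d]

lemma norm_conjTranspose_mul_self_eq_norm_eigenvalues (A : Matrix d d ℂ) :
    ‖Aᴴ * A‖ = ‖(RCLike.ofReal ∘ (isHermitian_conjTranspose_mul_self A).eigenvalues : d → ℂ)‖ := by
  conv_lhs => rw [(isHermitian_conjTranspose_mul_self A).spectral_theorem,
    Unitary.conjStarAlgAut_apply]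
  rw [← Unitary.coe_star, CStarRing.norm_mul_coe_unitary, CStarRing.norm_coe_unitary_mul,
    l2_opNorm_diagonal]

lemma opNorm_eq_l2_opNorm (A : Matrix d d ℂ) : opNorm A = ‖A‖ := by
  have hA := norm_conjTranspose_mul_self_eq_norm_eigenvalues A
  rw [l2_opNorm_conjTranspose_mul_self] at hA
  rw [opNorm]
  set e := (isHermitian_conjTranspose_mul_self A).eigenvalues
  have he0 : ∀ i, 0 ≤ e i := (posSemidef_conjTranspose_mul_self A).eigenvalues_nonneg
  have he : ∀ i, ‖(RCLike.ofReal (e i) : ℂ)‖ = e i := fun i => by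
    rw [RCLike.norm_ofReal, abs_of_nonneg (he0 i)]
  have hop : 0 ≤ ⨆ i, √(e i) := Real.iSup_nonneg fun _ => Real.sqrt_nonneg _
  refine le_antisymm (Real.iSup_le (fun i => ?_) (norm_nonneg A)) ?_
  · rw [← Real.sqrt_mul_self (norm_nonneg A), hA, ← he i]
    exact Real.sqrt_le_sqrt (norm_le_pi_norm (RCLike.ofReal ∘ e : d → ℂ) i)
  · refine mul_self_le_mul_self_iff (norm_nonneg A) hop |>.2 ?_
    rw [hA]
    refine (pi_norm_le_iff_of_nonneg (mul_nonneg hop hop)).2 fun i => ?_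
    rw [Function.comp_apply, he i, ← Real.mul_self_sqrt (he0 i)]
    have := le_ciSup (Set.finite_range fun i => √(e i)).bddAbove i
    exact mul_self_le_mul_self (Real.sqrt_nonneg _) this

lemma traceNorm_nonneg (A : Matrix d d ℂ) : 0 ≤ traceNorm A :=
  Finset.sum_nonneg fun _ _ => Real.sqrt_nonneg _

lemma traceNorm_neg (A : Matrix d d ℂ) : traceNorm (-A) = traceNorm A := by
  unfold traceNorm
  congr! 3
  rw [conjTranspose_neg, neg_mul_neg]

lemma norm_toEuclideanCLM_eigenvectorBasis (A : Matrix d d ℂ) (i : d) :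
    ‖toEuclideanCLM (𝕜 := ℂ) A ((isHermitian_conjTranspose_mul_self A).eigenvectorBasis i)‖ =
      √((isHermitian_conjTranspose_mul_self A).eigenvalues i) := by
  set hP := isHermitian_conjTranspose_mul_self A
  rw [ContinuousLinearMap.apply_norm_eq_sqrt_inner_adjoint_right,
    ← ContinuousLinearMap.star_eq_adjoint, ← map_star, ← ContinuousLinearMap.mul_def, ← map_mul,
    star_eq_conjTranspose]
  have hv : toEuclideanCLM (𝕜 := ℂ) (Aᴴ * A) (hP.eigenvectorBasis i) =
      (hP.eigenvalues i : ℂ) • hP.eigenvectorBasis i := by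
    ext1
    simp [hP.mulVec_eigenvectorBasis i]
  rw [hv, inner_smul_right, inner_self_eq_norm_sq_to_K, hP.eigenvectorBasis.orthonormal.1 i]
  simp

lemma trace_eq_sum_inner_toEuclideanCLM (M : Matrix d d ℂ) {ι : Type*} [Fintype ι]
    (b : OrthonormalBasis ι ℂ (EuclideanSpace ℂ d)) :
    M.trace = ∑ i, ⟪b i, toEuclideanCLM (𝕜 := ℂ) M (b i)⟫_ℂ := by
  have := LinearMap.trace_eq_sum_inner
    (toEuclideanCLM (𝕜 := ℂ) M : EuclideanSpace ℂ d →ₗ[ℂ] EuclideanSpace ℂ d) b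
  rw [coe_toEuclideanCLM_eq_toEuclideanLin] at this
  rw [← Matrix.trace_toLin_eq M (PiLp.basisFun 2 ℂ d)]
  exact this

lemma norm_trace_mul_le (A B : Matrix d d ℂ) : ‖(A * B).trace‖ ≤ traceNorm A * ‖B‖ := by
  set hP := isHermitian_conjTranspose_mul_self A
  rw [trace_mul_comm, trace_eq_sum_inner_toEuclideanCLM _ hP.eigenvectorBasis, traceNorm,
    Finset.sum_mul]
  refine (norm_sum_le _ _).trans (Finset.sum_le_sum fun i _ => ?_)
  calc ‖⟪hP.eigenvectorBasis i, toEuclideanCLM (𝕜 := ℂ) (B * A) (hP.eigenvectorBasis i)⟫_ℂ‖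
      ≤ ‖toEuclideanCLM (𝕜 := ℂ) B (toEuclideanCLM (𝕜 := ℂ) A (hP.eigenvectorBasis i))‖ := by
        rw [map_mul]
        simpa [hP.eigenvectorBasis.orthonormal.1 i] using
          norm_inner_le_norm (𝕜 := ℂ) (hP.eigenvectorBasis i) _
    _ ≤ ‖B‖ * √(hP.eigenvalues i) := by
        rw [← norm_toEuclideanCLM_eigenvectorBasis]
        exact (toEuclideanCLM (𝕜 := ℂ) B).le_opNorm _
    _ = _ := mul_comm _ _

end Norms

section Merge

variable {ι : Type*} [DecidableEq ι]

lemma merge_apply_mem (Λ : Finset ι) (f : {x // x ∈ Λ} → Fin 2) (g : {x // x ∉ Λ} → Fin 2)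
    (x : {x // x ∈ Λ}) : merge Λ f g x = f x := by
  rw [merge, dif_pos x.2]

lemma merge_apply_notMem (Λ : Finset ι) (f : {x // x ∈ Λ} → Fin 2) (g : {x // x ∉ Λ} → Fin 2)
    (x : {x // x ∉ Λ}) : merge Λ f g x = g x := by
  rw [merge, dif_neg x.2]

lemma merge_update_notMem {Λ : Finset ι} {x : ι} (hx : x ∉ Λ) (f : {x // x ∈ Λ} → Fin 2)
    (g : {x // x ∉ Λ} → Fin 2) (t : Fin 2) :
    merge Λ f (Function.update g ⟨x, hx⟩ t) = Function.update (merge Λ f g) x t := by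
  funext y
  by_cases hyx : y = x
  · subst hyx
    simp [merge, hx]
  · by_cases hy : y ∈ Λ
    · simp [merge, hy, hyx]
    · have hne : (⟨y, hy⟩ : {x // x ∉ Λ}) ≠ ⟨x, hx⟩ := fun h => hyx (congrArg Subtype.val h)
      simp [merge, hy, Function.update_of_ne hne, Function.update_of_ne hyx]

def mergeEquiv (Λ : Finset ι) :
    (({x // x ∈ Λ} → Fin 2) × ({x // x ∉ Λ} → Fin 2)) ≃ (ι → Fin 2) where
  toFun p := merge Λ p.1 p.2
  invFun f := (fun x => f x, fun x => f x)
  left_inv p :=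
    Prod.ext (funext (merge_apply_mem Λ p.1 p.2)) (funext (merge_apply_notMem Λ p.1 p.2))
  right_inv f := funext fun x => by by_cases hx : x ∈ Λ <;> simp [merge, hx]

end Merge

section PartialTrace

variable {ι : Type*} [Fintype ι] [DecidableEq ι]

lemma embed_merge_merge (Λ : Finset ι)
    (M : Matrix ({x // x ∈ Λ} → Fin 2) ({x // x ∈ Λ} → Fin 2) ℂ)
    (a b : {x // x ∈ Λ} → Fin 2) (g h : {x // x ∉ Λ} → Fin 2) :
    embed Λ M (merge Λ a g) (merge Λ b h) = if g = h then M a b else 0 := by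
  have hfun : ∀ c k, (fun x : {x // x ∈ Λ} => merge Λ c k x) = c := fun c k =>
    funext (merge_apply_mem Λ c k)
  have hcond : (∀ x, x ∉ Λ → merge Λ a g x = merge Λ b h x) ↔ g = h := by
    refine ⟨fun H => funext fun x => ?_, fun H x hx => ?_⟩
    · simpa only [merge_apply_notMem] using H x x.2
    · rw [merge, merge, dif_neg hx, dif_neg hx, H]
  simp only [embed, hcond, hfun]

lemma trace_mul_embed (Λ : Finset ι) (D : QMat ι)
    (M : Matrix ({x // x ∈ Λ} → Fin 2) ({x // x ∈ Λ} → Fin 2) ℂ) :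
    (D * embed Λ M).trace = (ptrace Λ D * M).trace := by
  simp only [trace, diag, mul_apply, ptrace, Finset.sum_mul]
  rw [← (mergeEquiv Λ).sum_comp, Fintype.sum_prod_type]
  simp_rw [← (mergeEquiv Λ).sum_comp (fun g => D _ g * _), Fintype.sum_prod_type]
  simp [mergeEquiv, embed_merge_merge]
  exact Finset.sum_congr rfl fun _ _ => Finset.sum_comm

lemma sum_prod_update_eq_two_mul {κ : Type*} [Fintype κ] [DecidableEq κ] (x : κ)
    (φ : (κ → Fin 2) → ℂ) :
    ∑ p : Fin 2 × (κ → Fin 2), φ (Function.update p.2 x p.1) = 2 * ∑ h, φ h := by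
  have hinv : Function.Involutive
      (fun p : Fin 2 × (κ → Fin 2) => (p.2 x, Function.update p.2 x p.1)) := fun p => by
    simp [Function.update_idem]
  rw [Fintype.sum_bijective _ hinv.bijective _ (fun p => φ p.2) (fun p => rfl),
    Fintype.sum_prod_type]
  simp [two_mul]

lemma merge_compl_singleton (x : ι) (F : ι → Fin 2) (t : Fin 2) :
    merge ({x}ᶜ : Finset ι) (fun y => F y) (fun _ => t) = Function.update F x t := by
  funext y
  by_cases hy : y = x
  · subst hy
    simp [merge]
  · simp [merge, hy]

lemma ptrace_compl_singleton_apply (x : ι) (D : QMat ι) (F G : ι → Fin 2) :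
    ptrace ({x}ᶜ : Finset ι) D (fun y => F y) (fun y => G y) =
      ∑ t : Fin 2, D (Function.update F x t) (Function.update G x t) := by
  let _ : Unique {y // y ∉ ({x}ᶜ : Finset ι)} :=
    ⟨⟨⟨x, by simp⟩⟩, fun y => Subtype.ext (by simpa using y.2)⟩
  rw [ptrace, ← (Equiv.funUnique _ (Fin 2)).symm.sum_comp]
  exact Finset.sum_congr rfl fun t _ => by
    rw [← merge_compl_singleton, ← merge_compl_singleton]
    rfl

lemma ptrace_compl_singleton_eq_zero_iff {x : ι} {D : QMat ι} :
    ptrace ({x}ᶜ : Finset ι) D = 0 ↔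
      ∀ F G : ι → Fin 2, ∑ t : Fin 2, D (Function.update F x t) (Function.update G x t) = 0 := by
  refine ⟨fun h F G => by rw [← ptrace_compl_singleton_apply, h]; rfl, fun h => ?_⟩
  funext f g
  have hrestrict : ∀ f : {y // y ∈ ({x}ᶜ : Finset ι)} → Fin 2,
      f = fun y => merge ({x}ᶜ : Finset ι) f (fun _ => 0) y.1 := fun f =>
    funext fun y => (merge_apply_mem _ f _ y).symm
  rw [hrestrict f, hrestrict g, ptrace_compl_singleton_apply, h]
  rfl

lemma ptrace_eq_zero_of_notMem {x : ι} {Λ : Finset ι} (hx : x ∉ Λ) {D : QMat ι}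
    (h : ptrace ({x}ᶜ : Finset ι) D = 0) : ptrace Λ D = 0 := by
  funext a b
  have key : 2 * ptrace Λ D a b = 0 := by
    rw [ptrace, ← sum_prod_update_eq_two_mul ⟨x, hx⟩, Fintype.sum_prod_type, Finset.sum_comm]
    simp only [merge_update_notMem]
    exact Finset.sum_eq_zero fun g _ => ptrace_compl_singleton_eq_zero_iff.mp h _ _
  exact (mul_eq_zero.mp key).resolve_left two_ne_zero

end PartialTrace

section Telescope

variable {n : ℕ}

def splice (k : ℕ) (f h : Fin n → Fin 2) : Fin n → Fin 2 :=
  fun y => if (y : ℕ) < k then h y else f y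

/-- `Δ` with its first `k` qubits traced out and replaced by the maximally mixed state,
`(I/2)^{⊗k} ⊗ Tr_{<k} Δ`. Averaging over all `h`, rather than over the first `k` coordinates
only, avoids a dependent index type. -/
def mixFirst (k : ℕ) (Δ : QMat (Fin n)) : QMat (Fin n) :=
  fun f g => if ∀ y : Fin n, (y : ℕ) < k → f y = g y then
    ((2 : ℂ) ^ n)⁻¹ * ∑ h, Δ (splice k f h) (splice k g h) else 0

lemma mixFirst_zero (Δ : QMat (Fin n)) : mixFirst 0 Δ = Δ := by
  funext f g
  have hsplice : ∀ f h : Fin n → Fin 2, splice 0 f h = f := fun f h =>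
    funext fun y => if_neg (Nat.not_lt_zero _)
  simp only [mixFirst, hsplice, Nat.not_lt_zero, IsEmpty.forall_iff, implies_true, if_true,
    Finset.sum_const, Finset.card_univ, nsmul_eq_mul, Fintype.card_fun, Fintype.card_fin,
    Nat.cast_pow, Nat.cast_ofNat]
  exact inv_mul_cancel_left₀ (by positivity) _

lemma mixFirst_eq_zero {Δ : QMat (Fin n)} (hΔ : Δ.trace = 0) : mixFirst n Δ = 0 := by
  funext f g
  have hsplice : ∀ f h : Fin n → Fin 2, splice n f h = h := fun f h => funext fun y => if_pos y.2
  simp only [mixFirst, hsplice]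
  split_ifs
  · rw [show ∑ h, Δ h h = Δ.trace from rfl, hΔ, mul_zero]; rfl
  · rfl

lemma isHermitian_mixFirst {Δ : QMat (Fin n)} (hΔ : Δ.IsHermitian) (k : ℕ) :
    (mixFirst k Δ).IsHermitian := by
  funext f g
  have hcond : (∀ y : Fin n, (y : ℕ) < k → g y = f y) ↔ ∀ y : Fin n, (y : ℕ) < k → f y = g y :=
    forall₂_congr fun _ _ => eq_comm
  simp only [conjTranspose_apply, mixFirst, hcond]
  split_ifs
  · simp only [star_mul', star_inv₀, star_sum, star_pow, star_ofNat]
    congr 1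
    exact Finset.sum_congr rfl fun h _ => by rw [← conjTranspose_apply, hΔ.eq]
  · exact star_zero _

lemma trace_mixFirst (Δ : QMat (Fin n)) (k : ℕ) : (mixFirst k Δ).trace = Δ.trace := by
  have hinv : Function.Involutive
      (fun p : (Fin n → Fin 2) × (Fin n → Fin 2) => (splice k p.1 p.2, splice k p.2 p.1)) :=
    fun p => Prod.ext (funext fun y => by by_cases hy : (y : ℕ) < k <;> simp [splice, hy])
      (funext fun y => by by_cases hy : (y : ℕ) < k <;> simp [splice, hy])
  have hswap := Fintype.sum_bijective _ hinv.bijective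
    (fun p => Δ (splice k p.1 p.2) (splice k p.1 p.2)) (fun p => Δ p.1 p.1) (fun p => rfl)
  simp only [Fintype.sum_prod_type, Finset.sum_const, Finset.card_univ, nsmul_eq_mul,
    Fintype.card_fun, Fintype.card_fin, Nat.cast_pow, Nat.cast_ofNat] at hswap
  simp only [trace, diag, mixFirst, implies_true, if_true]
  rw [← Finset.mul_sum, hswap, ← Finset.mul_sum]
  exact inv_mul_cancel_left₀ (by positivity) _

lemma splice_update_eq_splice_succ (x : Fin n) (F h : Fin n → Fin 2) (t : Fin 2) :
    splice x (Function.update F x t) h = splice (x + 1) F (Function.update h x t) := by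
  funext y
  by_cases hyx : y = x
  · subst hyx
    simp [splice]
  · have hyx' : (y : ℕ) ≠ x := Fin.val_ne_of_ne hyx
    simp only [splice, Function.update_of_ne hyx]
    split_ifs <;> first | rfl | omega

lemma splice_succ_update (x : Fin n) (F h : Fin n → Fin 2) (t : Fin 2) :
    splice (x + 1) (Function.update F x t) h = splice (x + 1) F h := by
  funext y
  by_cases hyx : y = x
  · subst hyx
    simp [splice]
  · simp [splice, Function.update_of_ne hyx]

lemma agree_update_iff (x : Fin n) {k : ℕ} (hk : k = x ∨ k = x + 1) (F G : Fin n → Fin 2)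
    (t : Fin 2) :
    (∀ y : Fin n, (y : ℕ) < k → Function.update F x t y = Function.update G x t y) ↔
      ∀ y : Fin n, (y : ℕ) < x → F y = G y := by
  refine ⟨fun H y hy => ?_, fun H y hy => ?_⟩
  · have hyx : y ≠ x := fun h => by subst h; omega
    simpa [Function.update_of_ne hyx] using H y (by omega)
  · by_cases hyx : y = x
    · subst hyx
      simp
    · simpa [Function.update_of_ne hyx] using H y (by have := Fin.val_ne_of_ne hyx; omega)

lemma sum_update_mixFirst_succ (Δ : QMat (Fin n)) (x : Fin n) (F G : Fin n → Fin 2) :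
    ∑ t : Fin 2, mixFirst x Δ (Function.update F x t) (Function.update G x t) =
      ∑ t : Fin 2, mixFirst (x + 1) Δ (Function.update F x t) (Function.update G x t) := by
  simp only [mixFirst, agree_update_iff x (.inl rfl), agree_update_iff x (.inr rfl),
    splice_update_eq_splice_succ, splice_succ_update]
  split_ifs
  · simp only [← Finset.mul_sum]
    congr 1
    rw [← Fintype.sum_prod_type' (f := fun t h => Δ (splice (x + 1) F (Function.update h x t))
      (splice (x + 1) G (Function.update h x t))), sum_prod_update_eq_two_mul x
      (fun h => Δ (splice (x + 1) F h) (splice (x + 1) G h))]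
    simp [two_mul]
  · rfl

lemma exists_W1_decomposition {Δ : QMat (Fin n)} (hΔ : Δ.IsHermitian) (hΔ0 : Δ.trace = 0) :
    ∃ D : Fin n → QMat (Fin n),
      (∀ x, (D x).IsHermitian ∧ (D x).trace = 0 ∧ ptrace ({x}ᶜ : Finset (Fin n)) (D x) = 0) ∧
      Δ = ∑ x, D x := by
  refine ⟨fun x => mixFirst x Δ - mixFirst (x + 1) Δ, fun x => ⟨?_, ?_, ?_⟩, ?_⟩
  · exact (isHermitian_mixFirst hΔ _).sub (isHermitian_mixFirst hΔ _)
  · rw [trace_sub, trace_mixFirst, trace_mixFirst, sub_self]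
  · refine ptrace_compl_singleton_eq_zero_iff.mpr fun F G => ?_
    simp only [Matrix.sub_apply]
    rw [Finset.sum_sub_distrib, sum_update_mixFirst_succ, sub_self]
  · rw [Fin.sum_univ_eq_sum_range (fun i => mixFirst i Δ - mixFirst (i + 1) Δ),
      Finset.sum_range_sub', mixFirst_zero, mixFirst_eq_zero hΔ0, sub_zero]

end Telescope

section LocalNorm

variable {ι : Type*} [Fintype ι] [DecidableEq ι]

lemma actsOn_zero (Λ : Finset ι) : ActsOn Λ (0 : QMat ι) :=
  ⟨0, isHermitian_zero, Matrix.ext fun f g => by simp [embed]⟩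

lemma actsOn_univ {H : QMat ι} (hH : H.IsHermitian) : ActsOn Finset.univ H := by
  refine ⟨fun a b => H (fun y => a ⟨y, Finset.mem_univ y⟩) (fun y => b ⟨y, Finset.mem_univ y⟩),
    Matrix.ext fun a b => ?_, Matrix.ext fun f g => ?_⟩
  · exact congrFun (congrFun hH.eq _) _
  · simp [embed]

lemma ActsOn.sub {Λ : Finset ι} {A B : QMat ι} (hA : ActsOn Λ A) (hB : ActsOn Λ B) :
    ActsOn Λ (A - B) := by
  obtain ⟨M, hM, rfl⟩ := hA
  obtain ⟨N, hN, rfl⟩ := hB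
  refine ⟨M - N, hM.sub hN, Matrix.ext fun f g => ?_⟩
  simp only [embed, Matrix.sub_apply]
  split_ifs <;> simp

lemma ActsOn.real_smul {Λ : Finset ι} {A : QMat ι} (hA : ActsOn Λ A) (t : ℝ) :
    ActsOn Λ ((t : ℂ) • A) := by
  obtain ⟨M, hM, rfl⟩ := hA
  refine ⟨(t : ℂ) • M, ?_, Matrix.ext fun f g => ?_⟩
  · rw [IsHermitian, conjTranspose_smul, Complex.star_def, Complex.conj_ofReal, hM.eq]
  · simp only [embed, Matrix.smul_apply]
    split_ifs <;> simp

variable {c : ℕ → ℝ}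

def locCost (c : ℕ → ℝ) (F : Finset ι → QMat ι) : ℝ :=
  2 * ⨆ x : ι, ∑ Λ ∈ Finset.univ.filter (fun Λ : Finset ι => x ∈ Λ), c Λ.card * opNorm (F Λ)

lemma locCost_nonneg (hc : ∀ Λ : Finset ι, Λ.Nonempty → 1 ≤ c Λ.card)
    (F : Finset ι → QMat ι) : 0 ≤ locCost c F := by
  refine mul_nonneg zero_le_two (Real.iSup_nonneg fun x => Finset.sum_nonneg fun Λ hΛ => ?_)
  rw [opNorm_eq_l2_opNorm]
  exact mul_nonneg (zero_le_one.trans (hc Λ ⟨x, (Finset.mem_filter.mp hΛ).2⟩)) (norm_nonneg _)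

lemma localNorm_le_locCost (hc : ∀ Λ : Finset ι, Λ.Nonempty → 1 ≤ c Λ.card)
    {F : Finset ι → QMat ι} (hF : ∀ Λ, ActsOn Λ (F Λ)) : localNorm c (∑ Λ, F Λ) ≤ locCost c F :=
  csInf_le ⟨0, by rintro _ ⟨G, -, -, rfl⟩; exact locCost_nonneg hc G⟩ ⟨F, hF, rfl, rfl⟩

lemma exists_locCost_lt {H : QMat ι} (hH : H.IsHermitian) {a : ℝ} (ha : localNorm c H < a) :
    ∃ F : Finset ι → QMat ι, (∀ Λ, ActsOn Λ (F Λ)) ∧ H = ∑ Λ, F Λ ∧ locCost c F < a := by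
  classical
  have hne : Set.Nonempty {r : ℝ | ∃ F : Finset ι → QMat ι, (∀ Λ, ActsOn Λ (F Λ)) ∧
      H = ∑ Λ, F Λ ∧ r = locCost c F} := by
    refine ⟨_, Pi.single Finset.univ H, fun Λ => ?_, ?_, rfl⟩
    · by_cases hΛ : Λ = Finset.univ
      · subst hΛ
        simpa using actsOn_univ hH
      · simpa [hΛ] using actsOn_zero Λ
    · simp
  obtain ⟨_, ⟨F, hF, hHF, rfl⟩, hlt⟩ := exists_lt_of_csInf_lt hne ha
  exact ⟨F, hF, hHF, hlt⟩

lemma localNorm_nonneg (hc : ∀ Λ : Finset ι, Λ.Nonempty → 1 ≤ c Λ.card) (H : QMat ι) :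
    0 ≤ localNorm c H :=
  Real.sInf_nonneg fun _ ⟨F, _, _, hr⟩ => hr ▸ locCost_nonneg hc F

lemma localNorm_zero (hc : ∀ Λ : Finset ι, Λ.Nonempty → 1 ≤ c Λ.card) :
    localNorm c (0 : QMat ι) = 0 := by
  refine le_antisymm ?_ (localNorm_nonneg hc 0)
  have h := localNorm_le_locCost hc (F := 0) fun Λ => actsOn_zero Λ
  simpa [locCost, opNorm_eq_l2_opNorm] using h

lemma locCost_real_smul (t : ℝ) (ht : 0 ≤ t) (F : Finset ι → QMat ι) :
    locCost c (fun Λ => (t : ℂ) • F Λ) = t * locCost c F := by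
  simp only [locCost, opNorm_eq_l2_opNorm, norm_smul, Complex.norm_real, Real.norm_of_nonneg ht,
    mul_left_comm _ t, ← Finset.mul_sum, ← Real.mul_iSup_of_nonneg ht]

lemma locCost_sub_le (hc : ∀ Λ : Finset ι, Λ.Nonempty → 1 ≤ c Λ.card)
    (F₁ F₂ : Finset ι → QMat ι) : locCost c (F₁ - F₂) ≤ locCost c F₁ + locCost c F₂ := by
  set S := fun (F : Finset ι → QMat ι) (x : ι) =>
    ∑ Λ ∈ Finset.univ.filter (fun Λ : Finset ι => x ∈ Λ), c Λ.card * opNorm (F Λ)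
  have hS : ∀ x, S (F₁ - F₂) x ≤ S F₁ x + S F₂ x := fun x => by
    simp only [S, ← Finset.sum_add_distrib, ← mul_add]
    refine Finset.sum_le_sum fun Λ hΛ => mul_le_mul_of_nonneg_left ?_
      (zero_le_one.trans (hc Λ ⟨x, (Finset.mem_filter.mp hΛ).2⟩))
    simpa [opNorm_eq_l2_opNorm] using norm_sub_le (F₁ Λ) (F₂ Λ)
  have hsup : ∀ F x, S F x ≤ ⨆ y, S F y := fun F x => le_ciSup (Finite.bddAbove_range _) x
  have h₁ := locCost_nonneg hc F₁
  have h₂ := locCost_nonneg hc F₂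
  simp only [locCost] at h₁ h₂ ⊢
  have := Real.iSup_le (fun x => (hS x).trans (add_le_add (hsup F₁ x) (hsup F₂ x)))
    (by linarith)
  linarith

lemma localNorm_sub_le (hc : ∀ Λ : Finset ι, Λ.Nonempty → 1 ≤ c Λ.card) {A B : QMat ι}
    (hA : A.IsHermitian) (hB : B.IsHermitian) :
    localNorm c (A - B) ≤ localNorm c A + localNorm c B := by
  refine le_of_forall_pos_lt_add fun ε hε => ?_
  obtain ⟨F₁, hF₁, rfl, h₁⟩ := exists_locCost_lt (c := c) hA (lt_add_of_pos_right _ (half_pos hε))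
  obtain ⟨F₂, hF₂, rfl, h₂⟩ := exists_locCost_lt (c := c) hB (lt_add_of_pos_right _ (half_pos hε))
  calc localNorm c (∑ Λ, F₁ Λ - ∑ Λ, F₂ Λ) = localNorm c (∑ Λ, (F₁ - F₂) Λ) := by
        simp [Finset.sum_sub_distrib]
    _ ≤ locCost c (F₁ - F₂) := localNorm_le_locCost hc fun Λ => (hF₁ Λ).sub (hF₂ Λ)
    _ ≤ locCost c F₁ + locCost c F₂ := locCost_sub_le hc F₁ F₂
    _ < _ := by linarith

end LocalNorm

section W1

variable {ι : Type*} [Fintype ι] [DecidableEq ι]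

lemma W1_nonneg (Δ : QMat ι) : 0 ≤ W1 Δ :=
  Real.sInf_nonneg fun _ ⟨D, _, _, hr⟩ =>
    hr ▸ mul_nonneg one_half_pos.le (Finset.sum_nonneg fun x _ => traceNorm_nonneg (D x))

lemma W1_neg (Δ : QMat ι) : W1 (-Δ) = W1 Δ := by
  have hneg : ∀ D : QMat ι, ∀ x, D.IsHermitian ∧ D.trace = 0 ∧ ptrace ({x}ᶜ : Finset ι) D = 0 →
      (-D).IsHermitian ∧ (-D).trace = 0 ∧ ptrace ({x}ᶜ : Finset ι) (-D) = 0 := by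
    rintro D x ⟨hD, htr, hpt⟩
    refine ⟨hD.neg, by rw [trace_neg, htr, neg_zero], ?_⟩
    rw [← neg_eq_zero, ← hpt]
    exact Matrix.ext fun f g => by simp [ptrace]
  unfold W1
  congr 1
  ext r
  constructor <;> rintro ⟨D, hD, hsum, rfl⟩ <;>
    refine ⟨-D, fun x => hneg _ x (hD x), ?_, by simp [traceNorm_neg]⟩ <;>
    simp [← hsum]

end W1

section Duality

variable {ι : Type*} [Fintype ι] [DecidableEq ι] {c : ℕ → ℝ}

lemma trace_mul_eq_zero_of_notMem {x : ι} {Λ : Finset ι} (hx : x ∉ Λ) {D F : QMat ι}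
    (hD : ptrace ({x}ᶜ : Finset ι) D = 0) (hF : ActsOn Λ F) : (D * F).trace = 0 := by
  obtain ⟨M, -, rfl⟩ := hF
  rw [trace_mul_embed, ptrace_eq_zero_of_notMem hx hD, zero_mul, trace_zero]

lemma re_trace_mul_sum_le (hc : ∀ Λ : Finset ι, Λ.Nonempty → 1 ≤ c Λ.card) {x : ι}
    {D : QMat ι} (hD : ptrace ({x}ᶜ : Finset ι) D = 0) {F : Finset ι → QMat ι}
    (hF : ∀ Λ, ActsOn Λ (F Λ)) :
    (D * ∑ Λ, F Λ).trace.re ≤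
      traceNorm D * ∑ Λ ∈ Finset.univ.filter (fun Λ : Finset ι => x ∈ Λ),
        c Λ.card * opNorm (F Λ) := by
  rw [Finset.mul_sum, trace_sum, ← Finset.sum_filter_of_ne (p := fun Λ => x ∈ Λ)
    fun Λ _ hne => by_contra fun hx => hne (trace_mul_eq_zero_of_notMem hx hD (hF Λ)),
    Complex.re_sum, Finset.mul_sum]
  refine Finset.sum_le_sum fun Λ hΛ => ?_
  calc (D * F Λ).trace.re ≤ ‖(D * F Λ).trace‖ := Complex.re_le_norm _
    _ ≤ traceNorm D * ‖F Λ‖ := norm_trace_mul_le _ _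
    _ ≤ traceNorm D * (c Λ.card * opNorm (F Λ)) := by
      rw [opNorm_eq_l2_opNorm]
      exact mul_le_mul_of_nonneg_left (le_mul_of_one_le_left (norm_nonneg _)
        (hc Λ ⟨x, (Finset.mem_filter.mp hΛ).2⟩)) (traceNorm_nonneg D)

lemma re_trace_sum_mul_sum_le (hc : ∀ Λ : Finset ι, Λ.Nonempty → 1 ≤ c Λ.card)
    {D : ι → QMat ι} (hD : ∀ x, ptrace ({x}ᶜ : Finset ι) (D x) = 0)
    {F : Finset ι → QMat ι} (hF : ∀ Λ, ActsOn Λ (F Λ)) :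
    ((∑ x, D x) * ∑ Λ, F Λ).trace.re ≤ locCost c F * ((1 / 2) * ∑ x, traceNorm (D x)) := by
  set S := fun x : ι =>
    ∑ Λ ∈ Finset.univ.filter (fun Λ : Finset ι => x ∈ Λ), c Λ.card * opNorm (F Λ)
  calc ((∑ x, D x) * ∑ Λ, F Λ).trace.re = ∑ x, (D x * ∑ Λ, F Λ).trace.re := by
        rw [Finset.sum_mul, trace_sum, Complex.re_sum]
    _ ≤ ∑ x, traceNorm (D x) * ⨆ y, S y := Finset.sum_le_sum fun x _ =>
        (re_trace_mul_sum_le hc (hD x) hF).trans <| mul_le_mul_of_nonneg_left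
          (le_ciSup (Finite.bddAbove_range S) x) (traceNorm_nonneg _)
    _ = locCost c F * ((1 / 2) * ∑ x, traceNorm (D x)) := by
        rw [locCost, ← Finset.sum_mul]
        ring

variable {n : ℕ}

lemma re_trace_mul_le_localNorm_mul_W1 (hc : ∀ Λ : Finset (Fin n), Λ.Nonempty → 1 ≤ c Λ.card)
    {Δ G : QMat (Fin n)} (hΔ : Δ.IsHermitian) (hΔ0 : Δ.trace = 0) (hG : G.IsHermitian) :
    (Δ * G).trace.re ≤ localNorm c G * W1 Δ := by
  obtain ⟨D₀, hD₀, hΔD₀⟩ := exists_W1_decomposition hΔ hΔ0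
  refine le_mul_of_forall_lt₀ fun a ha b hb => ?_
  obtain ⟨F, hF, rfl, hFa⟩ := exists_locCost_lt hG ha
  obtain ⟨_, ⟨D, hD, rfl, rfl⟩, hDb⟩ := exists_lt_of_csInf_lt (by exact ⟨_, D₀, hD₀, hΔD₀, rfl⟩) hb
  calc _ ≤ locCost c F * ((1 / 2) * ∑ x, traceNorm (D x)) :=
        re_trace_sum_mul_sum_le hc (fun x => (hD x).2.2) hF
    _ ≤ a * b := mul_le_mul hFa.le hDb.le
        (mul_nonneg one_half_pos.le (Finset.sum_nonneg fun x _ => traceNorm_nonneg _))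
        ((locCost_nonneg hc F).trans hFa.le)

lemma re_trace_mul_le_W1loc (hc : ∀ Λ : Finset (Fin n), Λ.Nonempty → 1 ≤ c Λ.card)
    {Δ G : QMat (Fin n)} (hΔ : Δ.IsHermitian) (hΔ0 : Δ.trace = 0) (hG : G.IsHermitian)
    (hG1 : localNorm c G ≤ 1) : (Δ * G).trace.re ≤ W1loc c Δ :=
  le_csSup ⟨W1 Δ, fun _ ⟨_, hG', hG'1, hr⟩ => hr ▸
    (re_trace_mul_le_localNorm_mul_W1 hc hΔ hΔ0 hG').trans
      (mul_le_of_le_one_left (W1_nonneg Δ) hG'1)⟩ ⟨G, hG, hG1, rfl⟩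

lemma W1loc_nonneg (hc : ∀ Λ : Finset (Fin n), Λ.Nonempty → 1 ≤ c Λ.card)
    {Δ : QMat (Fin n)} (hΔ : Δ.IsHermitian) (hΔ0 : Δ.trace = 0) : 0 ≤ W1loc c Δ := by
  simpa using re_trace_mul_le_W1loc hc hΔ hΔ0 isHermitian_zero
    ((localNorm_zero hc).trans_le zero_le_one)

lemma W1loc_le_W1 (hc : ∀ Λ : Finset (Fin n), Λ.Nonempty → 1 ≤ c Λ.card)
    {Δ : QMat (Fin n)} (hΔ : Δ.IsHermitian) (hΔ0 : Δ.trace = 0) : W1loc c Δ ≤ W1 Δ :=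
  csSup_le ⟨0, 0, isHermitian_zero, (localNorm_zero hc).trans_le zero_le_one, by simp⟩
    fun _ ⟨G, hG, hG1, hr⟩ => hr ▸ (re_trace_mul_le_localNorm_mul_W1 hc hΔ hΔ0 hG).trans
      (mul_le_of_le_one_left (W1_nonneg Δ) hG1)

lemma re_trace_mul_le_localNorm_mul_W1loc
    (hc : ∀ Λ : Finset (Fin n), Λ.Nonempty → 1 ≤ c Λ.card)
    {Δ G : QMat (Fin n)} (hΔ : Δ.IsHermitian) (hΔ0 : Δ.trace = 0) (hG : G.IsHermitian) :
    (Δ * G).trace.re ≤ localNorm c G * W1loc c Δ := by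
  refine le_mul_of_forall_lt₀ fun a ha b hb => ?_
  have ha0 : 0 < a := (localNorm_nonneg hc G).trans_lt ha
  obtain ⟨F, hF, rfl, hFa⟩ := exists_locCost_lt hG ha
  have hscaled : localNorm c (((a⁻¹ : ℝ) : ℂ) • ∑ Λ, F Λ) ≤ 1 := by
    rw [Finset.smul_sum]
    calc _ ≤ locCost c (fun Λ => ((a⁻¹ : ℝ) : ℂ) • F Λ) :=
          localNorm_le_locCost hc fun Λ => (hF Λ).real_smul _
      _ = a⁻¹ * locCost c F := locCost_real_smul _ (inv_nonneg.mpr ha0.le) F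
      _ ≤ 1 := by
          rw [inv_mul_le_iff₀ ha0, mul_one]
          exact hFa.le
  have h := re_trace_mul_le_W1loc hc hΔ hΔ0 (hG.smul (Complex.conj_ofReal _)) hscaled
  rw [Matrix.mul_smul, trace_smul, smul_eq_mul, Complex.re_ofReal_mul] at h
  calc (Δ * ∑ Λ, F Λ).trace.re = a * (a⁻¹ * (Δ * ∑ Λ, F Λ).trace.re) := by field_simp
    _ ≤ a * b := mul_le_mul_of_nonneg_left (h.trans hb.le) ha0.le

end Duality

section Gibbs

lemma isStrictlyPositive_exp {d : Type*} [Fintype d] [DecidableEq d] {A : Matrix d d ℂ}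
    (hA : A.IsHermitian) : IsStrictlyPositive (NormedSpace.exp A) := by
  rw [← CFC.real_exp_eq_normedSpace_exp hA.isSelfAdjoint,
    cfc_isStrictlyPositive_iff Real.exp A (by fun_prop) hA.isSelfAdjoint]
  exact fun x _ => Real.exp_pos x

lemma mlog_eq_log {d : Type*} [Fintype d] [DecidableEq d] {A : Matrix d d ℂ}
    (hA : A.IsHermitian) : mlog A = CFC.log A := by
  rw [mlog, dif_pos hA, CFC.log, hA.cfc_eq, IsHermitian.cfc, Unitary.conjStarAlgAut_apply]
  rfl

variable {ι : Type*} [Fintype ι] [DecidableEq ι] {H K : QMat ι}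

def partitionFunction (H : QMat ι) : ℝ :=
  (NormedSpace.exp (-H)).trace.re

lemma partitionFunction_pos (hH : H.IsHermitian) : 0 < partitionFunction H :=
  (Complex.pos_iff.mp (isStrictlyPositive_exp hH.neg).posDef.trace_pos).1

lemma trace_exp_neg (hH : H.IsHermitian) :
    (NormedSpace.exp (-H)).trace = partitionFunction H :=
  Complex.ext rfl (Complex.pos_iff.mp (isStrictlyPositive_exp hH.neg).posDef.trace_pos).2.symm

lemma gibbs_eq_smul (hH : H.IsHermitian) :
    gibbs H = (partitionFunction H)⁻¹ • NormedSpace.exp (-H) := by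
  rw [gibbs, trace_exp_neg hH, ← Complex.ofReal_inv, Complex.coe_smul]

lemma isStrictlyPositive_gibbs (hH : H.IsHermitian) : IsStrictlyPositive (gibbs H) := by
  rw [gibbs_eq_smul hH]
  exact (isStrictlyPositive_exp hH.neg).smul (inv_pos.mpr (partitionFunction_pos hH))

lemma gibbs_isState (hH : H.IsHermitian) : IsState (gibbs H) := by
  refine ⟨(isStrictlyPositive_gibbs hH).posDef.posSemidef, ?_⟩
  rw [gibbs, trace_smul, smul_eq_mul, inv_mul_cancel₀]
  rw [trace_exp_neg hH, Complex.ofReal_ne_zero]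
  exact (partitionFunction_pos hH).ne'

lemma mlog_gibbs (hH : H.IsHermitian) :
    mlog (gibbs H) = -H - algebraMap ℝ (QMat ι) (Real.log (partitionFunction H)) := by
  rw [mlog_eq_log (isStrictlyPositive_gibbs hH).isSelfAdjoint, gibbs_eq_smul hH,
    CFC.log_smul' _ (inv_pos.mpr (partitionFunction_pos hH)) (isStrictlyPositive_exp hH.neg),
    CFC.log_exp _ hH.neg.isSelfAdjoint, Real.log_inv, map_neg]
  abel

/-- The normalizations `ln Z` cancel because `gibbs H - gibbs K` is traceless. -/
lemma relEnt_gibbs_add_relEnt_gibbs (hH : H.IsHermitian) (hK : K.IsHermitian) :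
    relEnt (gibbs H) (gibbs K) + relEnt (gibbs K) (gibbs H) =
      ((gibbs H - gibbs K) * (K - H)).trace.re := by
  have htr : (gibbs H - gibbs K).trace = 0 := by
    rw [trace_sub, (gibbs_isState hH).2, (gibbs_isState hK).2, sub_self]
  have hlog : mlog (gibbs H) - mlog (gibbs K) = (K - H) +
      algebraMap ℝ (QMat ι) (Real.log (partitionFunction K) - Real.log (partitionFunction H)) := by
    rw [mlog_gibbs hH, mlog_gibbs hK, map_sub]
    abel
  rw [relEnt, relEnt, ← Complex.add_re, ← neg_sub (mlog (gibbs H)), mul_neg, trace_neg,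
    ← sub_eq_add_neg, ← trace_sub, ← sub_mul, hlog, mul_add, trace_add,
    Algebra.algebraMap_eq_smul_one, Matrix.mul_smul, mul_one, trace_smul, htr, smul_zero, add_zero]

lemma sq_W1_gibbs_sub_le (hH : H.IsHermitian) (hK : K.IsHermitian) {κ : ℝ}
    (hTCH : ∀ ρ : QMat ι, IsState ρ → W1 (ρ - gibbs H) ^ 2 ≤ κ * relEnt ρ (gibbs H))
    (hTCK : ∀ ρ : QMat ι, IsState ρ → W1 (ρ - gibbs K) ^ 2 ≤ κ * relEnt ρ (gibbs K)) :
    W1 (gibbs H - gibbs K) ^ 2 ≤ κ / 2 * ((gibbs H - gibbs K) * (K - H)).trace.re := by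
  have h₁ := hTCK (gibbs H) (gibbs_isState hH)
  have h₂ := hTCH (gibbs K) (gibbs_isState hK)
  rw [← neg_sub, W1_neg] at h₂
  rw [← relEnt_gibbs_add_relEnt_gibbs hH hK]
  linarith

end Gibbs

lemma one_le_penalty_card {n : ℕ} {c : ℕ → ℝ} (hc1 : c 1 = 1)
    (hcmono : ∀ k l, 1 ≤ k → k ≤ l → l ≤ n → c k ≤ c l) (Λ : Finset (Fin n))
    (hΛ : Λ.Nonempty) : 1 ≤ c Λ.card :=
  hc1 ▸ hcmono 1 _ le_rfl (Finset.card_pos.mpr hΛ) (Finset.card_le_univ Λ |>.trans_eq (by simp))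

end QW1

/-- Equivalence of the quantum `W₁` distance and the local quantum `W₁`
distance on Gibbs states of Hamiltonians with local quantum norm at most `M` satisfying a
transportation-cost inequality with constant `C`. -/
theorem stmt17 {n : ℕ} (c : ℕ → ℝ) (hc1 : c 1 = 1)
    (hcmono : ∀ k l, 1 ≤ k → k ≤ l → l ≤ n → c k ≤ c l)
    (Mb C : ℝ) (hC : 0 < C)
    (H K : QMat (Fin n)) (hH : H.IsHermitian) (hK : K.IsHermitian)
    (hHM : localNorm c H ≤ Mb) (hKM : localNorm c K ≤ Mb)
    (hTCH : ∀ ρ : QMat (Fin n), IsState ρ →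
      W1 (ρ - gibbs H) ^ 2 ≤ n * C / 2 * relEnt ρ (gibbs H))
    (hTCK : ∀ ρ : QMat (Fin n), IsState ρ →
      W1 (ρ - gibbs K) ^ 2 ≤ n * C / 2 * relEnt ρ (gibbs K)) :
    W1loc c (gibbs H - gibbs K) ^ 2 / (n : ℝ) ^ 2 ≤
        W1 (gibbs H - gibbs K) ^ 2 / (n : ℝ) ^ 2 ∧
    W1 (gibbs H - gibbs K) ^ 2 / (n : ℝ) ^ 2 ≤
        Mb * C / 2 * (W1loc c (gibbs H - gibbs K) / n) := by
  have hc := one_le_penalty_card hc1 hcmono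
  have hΔ : (gibbs H - gibbs K).IsHermitian :=
    (gibbs_isState hH).1.isHermitian.sub (gibbs_isState hK).1.isHermitian
  have hΔ0 : (gibbs H - gibbs K).trace = 0 := by
    rw [trace_sub, (gibbs_isState hH).2, (gibbs_isState hK).2, sub_self]
  have hTC := sq_W1_gibbs_sub_le hH hK hTCH hTCK
  set Δ := gibbs H - gibbs K
  have hW1loc := W1loc_nonneg hc hΔ hΔ0
  have hpair : (Δ * (K - H)).trace.re ≤ (Mb + Mb) * W1loc c Δ :=
    (re_trace_mul_le_localNorm_mul_W1loc hc hΔ hΔ0 (hK.sub hH)).trans <|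
      mul_le_mul_of_nonneg_right ((localNorm_sub_le hc hK hH).trans (add_le_add hKM hHM)) hW1loc
  have hW1 : W1 Δ ^ 2 ≤ n * (Mb * C / 2 * W1loc c Δ) := by
    have := mul_le_mul_of_nonneg_left hpair (by positivity : (0 : ℝ) ≤ n * C / 2 / 2)
    linarith
  refine ⟨by gcongr; exact W1loc_le_W1 hc hΔ hΔ0, ?_⟩
  rcases n.eq_zero_or_pos with rfl | hn
  · simp
  · calc W1 Δ ^ 2 / (n : ℝ) ^ 2 ≤ n * (Mb * C / 2 * W1loc c Δ) / (n : ℝ) ^ 2 := by gcongr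
      _ = Mb * C / 2 * (W1loc c Δ / n) := by field_simp
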